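/- arXiv:1705.06444 — 2 statements merged into one kernel-verified Lean document; each statement's English description precedes it below -/
import Mathlib

section
/- Let ψ = e_u ⊗ (λ₊ e_v ⊗ e₁ + λ₋ e_{v̄} ⊗ e₀) ∈ (ℂ²)^{⊗n} with α odd, ρ = |ψ⟩⟨ψ|, R the R-matrix of ρ, and C = 2λ₊λ₋ the concurrence of ψ. Then the multiset of eigenvalues of the 3×3 matrix RᵀR is {2^{α−2}·C², 2^{α−2}·C², 1 − C²}; explicitly, (RᵀR)₁₁ = (RᵀR)₂₂ = 2^{α−2}C² and (RᵀR)₃₃ = 1 − C². -/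
open Matrix BigOperators

noncomputable section

/-- The three Pauli matrices σx, σy, σz as 2×2 complex matrices. -/
def σp : Fin 3 → Matrix (Fin 2) (Fin 2) ℂ
  | 0 => !![0, 1; 1, 0]
  | 1 => !![0, -Complex.I; Complex.I, 0]
  | 2 => !![1, 0; 0, -1]

/-- `a · σ` for a real 3-vector `a`. -/
def dotSigma (a : Fin 3 → ℝ) : Matrix (Fin 2) (Fin 2) ℂ :=
  ∑ i : Fin 3, (a i : ℂ) • σp i

/-- `a` is a unit vector in ℝ³. -/
def IsUnitVec (a : Fin 3 → ℝ) : Prop :=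
  ∑ i : Fin 3, (a i) ^ 2 = 1

/-- Kronecker product of `n` 2×2 matrices, acting on `(ℂ²)^{⊗n}`, with the
tensor factors indexed by `Fin n` and the basis of `(ℂ²)^{⊗n}` by `Fin n → Fin 2`. -/
def kron {n : ℕ} (A : Fin n → Matrix (Fin 2) (Fin 2) ℂ) :
    Matrix (Fin n → Fin 2) (Fin n → Fin 2) ℂ :=
  fun f g => ∏ i : Fin n, A i (f i) (g i)

/-- The Bell operator `B̃_n` on `n = m+1` qubits determined by the unit vectors
`a i`, `a' i` (with `a 0 = b`, `a' 0 = b'` and the pair of settings at the last site):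
`B̃_n = (b·σ)⊗(a₂·σ)⊗⋯⊗(a_{n−1}·σ)⊗((a_n+a'_n)·σ)
      + (b'·σ)⊗(a'₂·σ)⊗⋯⊗(a'_{n−1}·σ)⊗((a_n−a'_n)·σ)`. -/
def bellOp {m : ℕ} (a a' : Fin (m + 1) → Fin 3 → ℝ) :
    Matrix (Fin (m + 1) → Fin 2) (Fin (m + 1) → Fin 2) ℂ :=
  kron (fun i => if i = Fin.last m then dotSigma (a i + a' i) else dotSigma (a i)) +
  kron (fun i => if i = Fin.last m then dotSigma (a i - a' i) else dotSigma (a' i))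

/-- The set of Bell expectation values `Tr(ρ·B̃_n)` over all Bell operators
(built from unit vectors); its supremum is the maximum violation `γ(ρ)`. -/
def bellSet {m : ℕ} (ρ : Matrix (Fin (m + 1) → Fin 2) (Fin (m + 1) → Fin 2) ℂ) : Set ℝ :=
  {x | ∃ a a' : Fin (m + 1) → Fin 3 → ℝ,
      (∀ i, IsUnitVec (a i)) ∧ (∀ i, IsUnitVec (a' i)) ∧
      x = ((ρ * bellOp a a').trace).re}

/-- The R-matrix of a density matrix on `n = m+1` qubits:
`R_{I,i} = Tr(ρ·(σ_{i₁}⊗⋯⊗σ_{i_{n−1}}⊗σ_i))`. -/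
def Rmat {m : ℕ} (ρ : Matrix (Fin (m + 1) → Fin 2) (Fin (m + 1) → Fin 2) ℂ) :
    Matrix (Fin m → Fin 3) (Fin 3) ℝ :=
  fun I i => ((ρ * kron (fun k => σp ((Fin.snoc I i : Fin (m + 1) → Fin 3) k))).trace).re

/-- Outer product `|ψ⟩⟨ψ|`. -/
def outer {ι : Type*} (ψ : ι → ℂ) : Matrix ι ι ℂ :=
  fun f g => ψ f * (starRingEnd ℂ) (ψ g)

/-- Reduced density matrix of the last qubit (partial trace of `|ψ⟩⟨ψ|`
over the first `N` qubits). -/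
def rhoA {N : ℕ} (ψ : (Fin (N + 1) → Fin 2) → ℂ) : Matrix (Fin 2) (Fin 2) ℂ :=
  fun s t => ∑ g : Fin N → Fin 2, ψ (Fin.snoc g s) * (starRingEnd ℂ) (ψ (Fin.snoc g t))

/-- Concurrence of a pure state w.r.t. the bipartition (first `N` qubits | last qubit):
`C(ψ) = √(2(1 − Tr ρ_A²))`. -/
def concurrence {N : ℕ} (ψ : (Fin (N + 1) → Fin 2) → ℂ) : ℝ :=
  Real.sqrt (2 * (1 - ((rhoA ψ * rhoA ψ).trace).re))

/-- Bit flip on `Fin 2`. -/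
def flip2 (b : Fin 2) : Fin 2 := if b = 0 then 1 else 0

/-- The paper's state `|ψ⟩ = |u⟩ ⊗ (λ₊|v⟩⊗|1⟩ + λ₋|ṽ⟩⊗|0⟩)` on `n = k+m+1` qubits,
where `u` indexes a computational basis state of the first `k` qubits, `v` a basis
state of the next `m = α−1` qubits, `ṽ` its bitwise complement, and the last qubit
carries `|1⟩`, `|0⟩` (with `e₀ = (1,0)ᵀ`, `e₁ = (0,1)ᵀ`). -/
def psiState (k m : ℕ) (u : Fin k → Fin 2) (v : Fin m → Fin 2) (lp lm : ℝ) :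
    (Fin (k + m + 1) → Fin 2) → ℂ :=
  fun f =>
    (if (fun i : Fin k => f (Fin.castLE (by omega) i)) = u then 1 else 0) *
      ((lp : ℂ) * (if (fun i : Fin m => f ⟨k + i.1, by omega⟩) = v then 1 else 0) *
          (if f (Fin.last (k + m)) = 1 then 1 else 0) +
        (lm : ℂ) *
            (if (fun i : Fin m => f ⟨k + i.1, by omega⟩) = fun i => flip2 (v i) then 1 else 0) *
          (if f (Fin.last (k + m)) = 0 then 1 else 0))

/-- Von Neumann entropy `−Tr(ρ ln ρ)` of a Hermitian matrix, via its eigenvalues. -/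
def vonNeumannEntropy {d : Type*} [Fintype d] [DecidableEq d] (ρ : Matrix d d ℂ)
    (h : ρ.IsHermitian) : ℝ :=
  -∑ i, h.eigenvalues i * Real.log (h.eigenvalues i)

/-!
Write `ψ = λ₋ |P₀⟩ + λ₊ |P₁⟩`, where the computational basis states `P₀ = u v̄ 0` and
`P₁ = u v 1` agree on the first `n - α` qubits and are complementary on the last `α`.
Expanding `R_{I,a} = ⟨ψ| σ_I ⊗ σ_a |ψ⟩` in `P₀, P₁` and summing over `I` site by site, each
entry of `RᵀR` becomes a sum over four labels `s t s' t' ∈ {0, 1}` of products of matrix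
elements of `σ⃗ ⊗ σ⃗ = 2 SWAP - 1`. These only see which labels coincide, so the shared sites
contribute `1` and each of the `α - 1` middle sites the same factor `±1`, `0` or `2`; for
`α - 1` even its power is `1`, `0` or `2^(α-1)`, and the sum is the stated diagonal matrix.
-/

theorem σp_isHermitian (t : Fin 3) : (σp t).IsHermitian := by
  ext x y
  fin_cases t <;> fin_cases x <;> fin_cases y <;> simp [σp]

theorem kron_isHermitian {n : ℕ} {A : Fin n → Matrix (Fin 2) (Fin 2) ℂ}
    (hA : ∀ i, (A i).IsHermitian) : (kron A).IsHermitian := by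
  ext f g
  simp only [conjTranspose_apply, kron, star_prod]
  exact Finset.prod_congr rfl fun i _ => (hA i).apply (f i) (g i)

theorem outer_isHermitian {ι : Type*} (ψ : ι → ℂ) : (outer ψ).IsHermitian := by
  ext f g
  simp [outer, mul_comm]

theorem ofReal_Rmat_apply {m : ℕ} {ρ : Matrix (Fin (m + 1) → Fin 2) (Fin (m + 1) → Fin 2) ℂ}
    (hρ : ρ.IsHermitian) (I : Fin m → Fin 3) (i : Fin 3) :
    (Rmat ρ I i : ℂ) =
      (ρ * kron (fun j => σp ((Fin.snoc I i : Fin (m + 1) → Fin 3) j))).trace := by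
  rw [Rmat, ← Complex.conj_eq_iff_re, ← Complex.star_def, ← Matrix.trace_conjTranspose,
    conjTranspose_mul, (kron_isHermitian fun j => σp_isHermitian _).eq, hρ.eq, trace_mul_comm]

theorem trace_outer_sum_mul {ι σ : Type*} [Fintype ι] [DecidableEq ι] [Fintype σ]
    (B : σ → ι) (w : σ → ℝ) (K : Matrix ι ι ℂ) :
    (outer (fun f => ∑ s, if f = B s then (w s : ℂ) else 0) * K).trace =
      ∑ s, ∑ t, (w s * w t : ℂ) * K (B t) (B s) := by
  have sum_mul_eq (F : ι → ℂ) :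
      ∑ f, (∑ s, if f = B s then (w s : ℂ) else 0) * F f = ∑ s, w s * F (B s) := by
    simp only [Finset.sum_mul, ite_mul, zero_mul]
    rw [Finset.sum_comm]
    simp
  simp only [trace, diag, mul_apply, outer, map_sum, apply_ite (starRingEnd ℂ), map_zero,
    Complex.conj_ofReal, mul_assoc, ← Finset.mul_sum, sum_mul_eq]

def sigmaDot (x y x' y' : Fin 2) : ℂ := ∑ t : Fin 3, σp t x y * σp t x' y'

/-- `sigmaDot x y x' y' = ⟨x x'| ∑ₜ σₜ ⊗ σₜ |y y'⟩`, and `∑ₜ σₜ ⊗ σₜ = 2 SWAP - 1`. -/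
theorem sigmaDot_eq (x y x' y' : Fin 2) :
    sigmaDot x y x' y' =
      (if x = y' ∧ y = x' then 2 else 0) - (if x = y ∧ x' = y' then 1 else 0) := by
  fin_cases x <;> fin_cases y <;> fin_cases x' <;> fin_cases y' <;>
    norm_num [sigmaDot, σp, Fin.sum_univ_three]

theorem sigmaDot_comp_of_injective {φ : Fin 2 → Fin 2} (hφ : φ.Injective) (x y x' y' : Fin 2) :
    sigmaDot (φ x) (φ y) (φ x') (φ y') = sigmaDot x y x' y' := by
  simp only [sigmaDot_eq, hφ.eq_iff]

theorem sigmaDot_self (x : Fin 2) : sigmaDot x x x x = 1 := by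
  norm_num [sigmaDot_eq]

theorem sigmaDot_pow_of_even {m : ℕ} (hm : Even m) (hm0 : m ≠ 0) (x y x' y' : Fin 2) :
    sigmaDot x y x' y' ^ m =
      if x = y ∧ x' = y' then 1 else if x = y' ∧ y = x' then 2 ^ m else 0 := by
  rw [sigmaDot_eq]
  by_cases hdiag : x = y ∧ x' = y' <;> by_cases hswap : x = y' ∧ y = x'
  · rw [if_pos hswap, if_pos hdiag, if_pos hdiag]
    norm_num
  · rw [if_neg hswap, if_pos hdiag, if_pos hdiag]
    norm_num [hm.neg_one_pow]
  · rw [if_pos hswap, if_neg hdiag, if_neg hdiag, if_pos hswap]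
    norm_num
  · rw [if_neg hswap, if_neg hdiag, if_neg hdiag, if_neg hswap]
    simp [hm0]

theorem sum_kron_snoc_mul_kron_snoc {n : ℕ} (g f g' f' : Fin (n + 1) → Fin 2) (a b : Fin 3) :
    ∑ I : Fin n → Fin 3,
        kron (fun j => σp ((Fin.snoc I a : Fin (n + 1) → Fin 3) j)) g f *
          kron (fun j => σp ((Fin.snoc I b : Fin (n + 1) → Fin 3) j)) g' f' =
      σp a (g (Fin.last n)) (f (Fin.last n)) * σp b (g' (Fin.last n)) (f' (Fin.last n)) *
        ∏ j : Fin n, sigmaDot (g j.castSucc) (f j.castSucc) (g' j.castSucc) (f' j.castSucc) := by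
  simp only [kron, Fin.prod_univ_castSucc, Fin.snoc_castSucc, Fin.snoc_last, sigmaDot,
    Finset.prod_univ_sum, Fintype.piFinset_univ]
  rw [Finset.mul_sum]
  refine Finset.sum_congr rfl fun I _ => ?_
  rw [Finset.prod_mul_distrib]
  ring

/-- `psiBasis u v 1 = u v 1` and `psiBasis u v 0 = u v̄ 0`: on `Fin 2`, `x + 1` is the bit
flip. -/
def psiBasis {k m : ℕ} (u : Fin k → Fin 2) (v : Fin m → Fin 2) (s : Fin 2) :
    Fin (k + m + 1) → Fin 2 :=
  Fin.snoc (Fin.append u fun i => v i + 1 + s) s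

def psiBasisComb {k m : ℕ} (u : Fin k → Fin 2) (v : Fin m → Fin 2) (w : Fin 2 → ℝ) :
    (Fin (k + m + 1) → Fin 2) → ℂ :=
  fun f => ∑ s, if f = psiBasis u v s then (w s : ℂ) else 0

theorem flip2_eq_add_one (x : Fin 2) : flip2 x = x + 1 := by
  fin_cases x <;> rfl

theorem eq_snoc_append_iff {k m : ℕ} {α : Type*} (f : Fin (k + m + 1) → α) (p : Fin k → α)
    (q : Fin m → α) (c : α) :
    f = Fin.snoc (Fin.append p q) c ↔
      ((fun i : Fin k => f (Fin.castLE (by omega) i)) = p ∧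
        (fun i : Fin m => f ⟨k + i.1, by omega⟩) = q ∧ f (Fin.last (k + m)) = c) := by
  change _ ↔ (fun i : Fin k => f (Fin.castAdd m i).castSucc) = p ∧
    (fun i : Fin m => f (Fin.natAdd k i).castSucc) = q ∧ f (Fin.last (k + m)) = c
  constructor
  · rintro rfl
    simp only [Fin.snoc_castSucc, Fin.append_left, Fin.append_right, Fin.snoc_last, and_self]
  · rintro ⟨rfl, rfl, rfl⟩
    conv_lhs => rw [← Fin.snoc_init_self f, ← Fin.append_castAdd_natAdd (f := Fin.init f)]
    rfl

theorem psiState_eq_psiBasisComb {k m : ℕ} (u : Fin k → Fin 2) (v : Fin m → Fin 2)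
    (lp lm : ℝ) : psiState k m u v lp lm = psiBasisComb u v ![lm, lp] := by
  funext f
  simp only [psiState, psiBasisComb, psiBasis, eq_snoc_append_iff, Fin.sum_univ_two,
    flip2_eq_add_one]
  have add_one_add_one (x : Fin 2) : x + 1 + 1 = x := by fin_cases x <;> rfl
  generalize f (Fin.last (k + m)) = b
  fin_cases b <;> simp [add_one_add_one, ← ite_and, and_comm]

theorem prod_sigmaDot_psiBasis {k m : ℕ} (u : Fin k → Fin 2) (v : Fin m → Fin 2)
    (s t s' t' : Fin 2) :
    ∏ j : Fin (k + m), sigmaDot (psiBasis u v s j.castSucc) (psiBasis u v t j.castSucc)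
        (psiBasis u v s' j.castSucc) (psiBasis u v t' j.castSucc) =
      sigmaDot s t s' t' ^ m := by
  simp only [psiBasis, Fin.snoc_castSucc, Fin.prod_univ_add, Fin.append_left, Fin.append_right,
    sigmaDot_self, Finset.prod_const_one, one_mul,
    sigmaDot_comp_of_injective (add_right_injective _), Finset.prod_const, Finset.card_fin]

theorem Rmat_transpose_mul_self_psiBasisComb_apply {k m : ℕ} (u : Fin k → Fin 2)
    (v : Fin m → Fin 2) (w : Fin 2 → ℝ) (a b : Fin 3) :
    (((Rmat (outer (psiBasisComb u v w)))ᵀ * Rmat (outer (psiBasisComb u v w))) a b : ℂ) =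
      ∑ s, ∑ t, ∑ s', ∑ t', (w s * w t * (w s' * w t') : ℂ) *
        (σp a t s * σp b t' s' * sigmaDot t s t' s' ^ m) := by
  have hR (I : Fin (k + m) → Fin 3) (i : Fin 3) :
      (Rmat (outer (psiBasisComb u v w)) I i : ℂ) = ∑ s, ∑ t, (w s * w t : ℂ) *
        kron (fun j => σp ((Fin.snoc I i : Fin (k + m + 1) → Fin 3) j))
          (psiBasis u v t) (psiBasis u v s) := by
    rw [ofReal_Rmat_apply (outer_isHermitian _)]
    exact trace_outer_sum_mul _ _ _
  simp only [mul_apply, transpose_apply, Complex.ofReal_sum, Complex.ofReal_mul, hR,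
    Finset.sum_mul]
  simp only [Finset.mul_sum]
  rw [Finset.sum_comm]
  refine Finset.sum_congr rfl fun s _ => ?_
  rw [Finset.sum_comm]
  refine Finset.sum_congr rfl fun t _ => ?_
  rw [Finset.sum_comm]
  refine Finset.sum_congr rfl fun s' _ => ?_
  rw [Finset.sum_comm]
  refine Finset.sum_congr rfl fun t' _ => ?_
  simp only [mul_mul_mul_comm _ (kron _ _ _ : ℂ), ← Finset.mul_sum, sum_kron_snoc_mul_kron_snoc,
    prod_sigmaDot_psiBasis]
  simp only [psiBasis, Fin.snoc_last]

theorem sum_weights_sigmaDot_pow_eq_diagonal {m : ℕ} (hm : Even m) (hm0 : m ≠ 0)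
    (w : Fin 2 → ℝ) (a b : Fin 3) :
    ∑ s, ∑ t, ∑ s', ∑ t', (w s * w t * (w s' * w t') : ℂ) *
        (σp a t s * σp b t' s' * sigmaDot t s t' s' ^ m) =
      ((diagonal ![2 ^ (m + 1) * (w 0 * w 1) ^ 2, 2 ^ (m + 1) * (w 0 * w 1) ^ 2,
        (w 0 ^ 2 - w 1 ^ 2) ^ 2] a b : ℝ) : ℂ) := by
  simp only [sigmaDot_pow_of_even hm hm0, Fin.sum_univ_two]
  fin_cases a <;> fin_cases b <;> norm_num [σp] <;> ring

theorem RtR_eigenvalues_odd_general {k m : ℕ} (hm : 1 ≤ m) (α : ℕ) (hα : α = m + 1)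
    (hodd : Odd α)
    (u : Fin k → Fin 2) (v : Fin m → Fin 2) (lp lm : ℝ)
    (hnorm : lp ^ 2 + lm ^ 2 = 1)
    (C : ℝ) (hC : C = 2 * lp * lm) :
    (Rmat (outer (psiState k m u v lp lm)))ᵀ * Rmat (outer (psiState k m u v lp lm)) =
      Matrix.diagonal
        ![(2 : ℝ) ^ (α - 2) * C ^ 2, (2 : ℝ) ^ (α - 2) * C ^ 2, 1 - C ^ 2] := by
  subst hα hC
  have hm_even : Even m := by simpa [Nat.odd_add_one] using hodd
  ext a b
  apply Complex.ofReal_injective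
  rw [psiState_eq_psiBasisComb, Rmat_transpose_mul_self_psiBasisComb_apply,
    sum_weights_sigmaDot_pow_eq_diagonal hm_even (by omega)]
  obtain ⟨n, rfl⟩ := Nat.exists_eq_add_of_le' hm
  congr 2
  ext i
  fin_cases i <;>
    simp only [Fin.isValue, Fin.zero_eta, Fin.mk_one, Fin.reduceFinMk, cons_val_zero, cons_val_one,
      cons_val_fin_one, cons_val, Nat.reduceSubDiff]
  · ring
  · ring
  · linear_combination (lp ^ 2 + lm ^ 2 + 1) * hnorm

/-- for `ψ = e_u ⊗ (λ₊ e_v ⊗ e₁ + λ₋ e_{v̄} ⊗ e₀)` with `α = m+1` odd,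
`ρ = |ψ⟩⟨ψ|`, and `C = 2λ₊λ₋`, the matrix `RᵀR` equals
`diag(2^{α−2}C², 2^{α−2}C², 1 − C²)`; in particular its eigenvalue multiset is
`{2^{α−2}C², 2^{α−2}C², 1 − C²}`. -/
theorem RtR_eigenvalues_odd {k m : ℕ} (hm : 1 ≤ m) (α : ℕ) (hα : α = m + 1)
    (hodd : Odd α)
    (u : Fin k → Fin 2) (v : Fin m → Fin 2) (lp lm : ℝ)
    (hlp : 0 < lp) (hlm : 0 < lm) (hnorm : lp ^ 2 + lm ^ 2 = 1)
    (C : ℝ) (hC : C = 2 * lp * lm) :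
    (Rmat (outer (psiState k m u v lp lm)))ᵀ * Rmat (outer (psiState k m u v lp lm)) =
      Matrix.diagonal
        ![(2 : ℝ) ^ (α - 2) * C ^ 2, (2 : ℝ) ^ (α - 2) * C ^ 2, 1 - C ^ 2] :=
  RtR_eigenvalues_odd_general hm α hα hodd u v lp lm hnorm C hC
end
end

section
/- Let G = (1/2)(−|111000⟩ + |001110⟩ + |100011⟩ + |010101⟩) ∈ (ℂ²)^{⊗6} and ρ = |G⟩⟨G|. Then for every Bell operator B̃′₆ of the exchanged form (in which the pair of measurement settings sits on the first qubit instead of the last), Tr(ρ·B̃′₆) ≤ 6; equivalently, the maximum violation of the Bell inequality of ρ over such Bell operators is at most 6 = 2√(13 − 2^{δ+2}·e^{−S_{A(δ)}}) for δ ∈ {1,2}, where S_{A(1)} = ln 2 and S_{A(2)} = 2 ln 2 are the entanglement entropies of qubit 6 and of qubits 5–6 respectively. -/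
open Matrix BigOperators

noncomputable section

/-- The paper's six-qubit state
`G = (λ₊/√2)(−|111000⟩ + |001110⟩) + (λ₋/√2)(|100011⟩ + |010101⟩)`. -/
def G6 (lp lm : ℝ) : (Fin (4 + 1 + 1) → Fin 2) → ℂ := fun f =>
  (lp : ℂ) / (Real.sqrt 2 : ℂ) *
      (-(if f = ![1, 1, 1, 0, 0, 0] then 1 else 0) +
        (if f = ![0, 0, 1, 1, 1, 0] then 1 else 0)) +
  (lm : ℂ) / (Real.sqrt 2 : ℂ) *
      ((if f = ![1, 0, 0, 0, 1, 1] then 1 else 0) +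
        (if f = ![0, 1, 0, 1, 0, 1] then 1 else 0))

/-- Reduced density matrix of the last two qubits (qubits 5 and 6) of a six-qubit
state: the partial trace of `|ψ⟩⟨ψ|` over the first four qubits, in the basis
`(|00⟩, |01⟩, |10⟩, |11⟩)` indexed by `Fin 2 × Fin 2`. -/
def rhoA2 (ψ : (Fin (4 + 1 + 1) → Fin 2) → ℂ) :
    Matrix (Fin 2 × Fin 2) (Fin 2 × Fin 2) ℂ :=
  fun s t => ∑ g : Fin 4 → Fin 2,
    ψ (Fin.snoc (Fin.snoc g s.1) s.2) * (starRingEnd ℂ) (ψ (Fin.snoc (Fin.snoc g t.1) t.2))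

/-- The exchanged Bell operator `B̃′₆` on six qubits, with the pair of measurement
settings at the first site and the single settings `b = a 5`, `b' = a' 5` at the
last site:
`B̃′₆ = ((a₁+a′₁)·σ)⊗(a₂·σ)⊗⋯⊗(a₅·σ)⊗(b·σ) + ((a₁−a′₁)·σ)⊗(a′₂·σ)⊗⋯⊗(a′₅·σ)⊗(b′·σ)`. -/
def bellOpEx (a a' : Fin (4 + 1 + 1) → Fin 3 → ℝ) :
    Matrix (Fin (4 + 1 + 1) → Fin 2) (Fin (4 + 1 + 1) → Fin 2) ℂ :=
  kron (fun i => if i = 0 then dotSigma (a i + a' i) else dotSigma (a i)) +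
  kron (fun i => if i = 0 then dotSigma (a i - a' i) else dotSigma (a' i))

/-!
Each of the two Kronecker terms `K` of `B̃′₆` is a product of matrices `c·σ`, and
`(c·σ)² = |c|²·1`; hence `K†K = |a₁ ± a′₁|²·1`, and Cauchy–Schwarz gives
`⟨ψ|K|ψ⟩ ≤ |a₁ ± a′₁| ≤ 2` for every normalized `ψ`, so `Tr(ρ·B̃′₆) ≤ 4`.
The one- and two-qubit marginals of `G` are maximally mixed, which gives the entropies
`ln 2` and `2 ln 2`; and `2^{δ+2} e^{−δ ln 2} = 4`, so `2√(13 − 4) = 6` for every `δ`.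
-/

open scoped InnerProductSpace

section Kronecker

variable {n : ℕ}

lemma kron_mul (A B : Fin n → Matrix (Fin 2) (Fin 2) ℂ) :
    kron A * kron B = kron (fun i => A i * B i) := by
  ext f g
  simp only [kron, mul_apply]
  rw [Finset.prod_univ_sum, Fintype.piFinset_univ]
  exact Finset.sum_congr rfl fun x _ => Finset.prod_mul_distrib.symm

lemma kron_conjTranspose (A : Fin n → Matrix (Fin 2) (Fin 2) ℂ) :
    (kron A)ᴴ = kron (fun i => (A i)ᴴ) := by
  ext f g
  simp [kron, conjTranspose_apply]

lemma kron_one : kron (fun _ : Fin n => (1 : Matrix (Fin 2) (Fin 2) ℂ)) = 1 := by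
  ext f g
  simp [kron, one_apply, Finset.prod_boole, funext_iff]

lemma kron_smul (c : Fin n → ℂ) (A : Fin n → Matrix (Fin 2) (Fin 2) ℂ) :
    kron (fun i => c i • A i) = (∏ i, c i) • kron A := by
  ext f g
  simp [kron, Finset.prod_mul_distrib]

end Kronecker

lemma dotSigma_conjTranspose (c : Fin 3 → ℝ) : (dotSigma c)ᴴ = dotSigma c := by
  ext i j
  fin_cases i <;> fin_cases j <;> simp [dotSigma, σp, Fin.sum_univ_three, conjTranspose_apply]

lemma dotSigma_mul_self (c : Fin 3 → ℝ) :
    dotSigma c * dotSigma c = ((∑ i, c i ^ 2 : ℝ) : ℂ) • 1 := by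
  ext i j
  fin_cases i <;> fin_cases j <;> simp [dotSigma, σp, mul_apply, Fin.sum_univ_succ] <;>
    first | ring1 | linear_combination (-(c 1 : ℂ) ^ 2) * Complex.I_sq

lemma conjTranspose_kron_dotSigma_mul_self {n : ℕ} (b : Fin n → Fin 3 → ℝ) :
    (kron fun i => dotSigma (b i))ᴴ * kron (fun i => dotSigma (b i)) =
      ((∏ i, ∑ k, b i k ^ 2 : ℝ) : ℂ) • 1 := by
  simp only [kron_conjTranspose, kron_mul, dotSigma_conjTranspose, dotSigma_mul_self,
    kron_smul, kron_one, Complex.ofReal_prod]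

lemma outer_eq_vecMulVec {ι : Type*} (ψ : ι → ℂ) : outer ψ = vecMulVec ψ (star ψ) := rfl

section Expectation

variable {ι : Type*} [Fintype ι]

lemma trace_outer_mul (ψ : ι → ℂ) (M : Matrix ι ι ℂ) :
    (outer ψ * M).trace = ⟪WithLp.toLp 2 ψ, WithLp.toLp 2 (M *ᵥ ψ)⟫_ℂ := by
  rw [trace_mul_comm, outer_eq_vecMulVec, mul_vecMulVec, trace_vecMulVec]
  rfl

lemma norm_toLp_mulVec_of_conjTranspose_mul_self [DecidableEq ι] {M : Matrix ι ι ℂ} {c : ℝ}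
    (hc : 0 ≤ c) (hM : Mᴴ * M = (c : ℂ) • 1) (ψ : ι → ℂ) :
    ‖WithLp.toLp 2 (M *ᵥ ψ)‖ = √c * ‖WithLp.toLp 2 ψ‖ := by
  have hsq : ‖WithLp.toLp 2 (M *ᵥ ψ)‖ ^ 2 = c * ‖WithLp.toLp 2 ψ‖ ^ 2 := by
    rw [norm_sq_eq_re_inner (𝕜 := ℂ), norm_sq_eq_re_inner (𝕜 := ℂ),
      EuclideanSpace.inner_toLp_toLp, EuclideanSpace.inner_toLp_toLp, star_mulVec,
      dotProduct_comm, ← dotProduct_mulVec, mulVec_mulVec, hM, smul_mulVec, one_mulVec,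
      dotProduct_smul, smul_eq_mul, dotProduct_comm]
    exact Complex.re_ofReal_mul _ _
  refine (sq_eq_sq₀ (norm_nonneg _) (by positivity)).1 ?_
  rw [hsq, mul_pow, Real.sq_sqrt hc]

lemma re_trace_outer_mul_le [DecidableEq ι] {M : Matrix ι ι ℂ} {c : ℝ} (hc : 0 ≤ c)
    (hM : Mᴴ * M = (c : ℂ) • 1) (ψ : ι → ℂ) :
    (outer ψ * M).trace.re ≤ √c * ‖WithLp.toLp 2 ψ‖ ^ 2 := by
  rw [trace_outer_mul]
  refine (re_inner_le_norm (𝕜 := ℂ) _ _).trans_eq ?_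
  rw [norm_toLp_mulVec_of_conjTranspose_mul_self hc hM]
  ring

end Expectation

lemma re_trace_outer_mul_kron_dotSigma_le {n : ℕ} (ψ : (Fin n → Fin 2) → ℂ)
    (b : Fin n → Fin 3 → ℝ) (j : Fin n) (hb : ∀ i ≠ j, IsUnitVec (b i)) :
    (outer ψ * kron fun i => dotSigma (b i)).trace.re ≤
      √(∑ k, b j k ^ 2) * ‖WithLp.toLp 2 ψ‖ ^ 2 := by
  refine re_trace_outer_mul_le (by positivity) ?_ ψ
  rw [conjTranspose_kron_dotSigma_mul_self, Finset.prod_eq_single j (fun i _ hi => hb i hi)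
    (by simp)]

lemma sqrt_sum_sq_add_le_two {ι : Type*} [Fintype ι] {x y : ι → ℝ}
    (hx : ∑ k, x k ^ 2 = 1) (hy : ∑ k, y k ^ 2 = 1) : √(∑ k, (x k + y k) ^ 2) ≤ 2 := by
  rw [Real.sqrt_le_left zero_le_two]
  calc ∑ k, (x k + y k) ^ 2 ≤ ∑ k, 2 * (x k ^ 2 + y k ^ 2) :=
        Finset.sum_le_sum fun k _ => by nlinarith [sq_nonneg (x k - y k)]
    _ = 2 ^ 2 := by rw [← Finset.mul_sum, Finset.sum_add_distrib, hx, hy]; norm_num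

lemma sqrt_sum_sq_sub_le_two {ι : Type*} [Fintype ι] {x y : ι → ℝ}
    (hx : ∑ k, x k ^ 2 = 1) (hy : ∑ k, y k ^ 2 = 1) : √(∑ k, (x k - y k) ^ 2) ≤ 2 := by
  simpa [sub_eq_add_neg] using sqrt_sum_sq_add_le_two (y := -y) hx (by simpa using hy)

lemma re_trace_outer_mul_bellOpEx_le (ψ : (Fin (4 + 1 + 1) → Fin 2) → ℂ)
    (hψ : ‖WithLp.toLp 2 ψ‖ = 1) (a a' : Fin (4 + 1 + 1) → Fin 3 → ℝ)
    (ha : ∀ i, IsUnitVec (a i)) (ha' : ∀ i, IsUnitVec (a' i)) :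
    (outer ψ * bellOpEx a a').trace.re ≤ 4 := by
  have hsum := re_trace_outer_mul_kron_dotSigma_le ψ
    (fun i => if i = 0 then a i + a' i else a i) 0 (fun i hi => by simpa [hi] using ha i)
  have hdiff := re_trace_outer_mul_kron_dotSigma_le ψ
    (fun i => if i = 0 then a i - a' i else a' i) 0 (fun i hi => by simpa [hi] using ha' i)
  simp only [apply_ite dotSigma, if_pos, Pi.add_apply, Pi.sub_apply, hψ, one_pow, mul_one]
    at hsum hdiff
  rw [bellOpEx, mul_add, trace_add, Complex.add_re]
  linarith [sqrt_sum_sq_add_le_two (ha 0) (ha' 0), sqrt_sum_sq_sub_le_two (ha 0) (ha' 0)]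

-- `2G` has integer amplitudes, so the norm and the marginals of `G` reduce to finite integer
-- sums, which `decide` evaluates.
def twoG (f : Fin (4 + 1 + 1) → Fin 2) : ℤ :=
  -(if f = ![1, 1, 1, 0, 0, 0] then 1 else 0) + (if f = ![0, 0, 1, 1, 1, 0] then 1 else 0) +
    (if f = ![1, 0, 0, 0, 1, 1] then 1 else 0) + (if f = ![0, 1, 0, 1, 0, 1] then 1 else 0)

lemma G6_apply (f : Fin (4 + 1 + 1) → Fin 2) :
    G6 (√2)⁻¹ (√2)⁻¹ f = (twoG f : ℂ) / 2 := by
  have h : ((√2)⁻¹ : ℂ) / √2 = 1 / 2 := by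
    rw [div_eq_mul_inv, ← mul_inv, ← Complex.ofReal_mul, Real.mul_self_sqrt zero_le_two]
    norm_num
  simp only [G6, twoG, Complex.ofReal_inv, h]
  push_cast
  ring

lemma sum_twoG_sq : ∑ f, twoG f ^ 2 = 4 := by decide +kernel

lemma sum_twoG_snoc_mul (s t : Fin 2) :
    ∑ g : Fin (4 + 1) → Fin 2, twoG (Fin.snoc g s) * twoG (Fin.snoc g t) =
      if s = t then 2 else 0 := by
  revert s t; decide +kernel

lemma sum_twoG_snoc_snoc_mul (s t : Fin 2 × Fin 2) :
    ∑ g : Fin 4 → Fin 2, twoG (Fin.snoc (Fin.snoc g s.1) s.2) *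
      twoG (Fin.snoc (Fin.snoc g t.1) t.2) = if s = t then 1 else 0 := by
  revert s t; decide +kernel

lemma G6_mul_conj (f f' : Fin (4 + 1 + 1) → Fin 2) :
    G6 (√2)⁻¹ (√2)⁻¹ f * starRingEnd ℂ (G6 (√2)⁻¹ (√2)⁻¹ f') =
      ((twoG f * twoG f' : ℤ) : ℂ) / 4 := by
  rw [G6_apply, G6_apply, map_div₀, map_intCast, map_ofNat]
  push_cast
  ring

lemma norm_toLp_G6 : ‖WithLp.toLp 2 (G6 (√2)⁻¹ (√2)⁻¹)‖ = 1 := by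
  rw [EuclideanSpace.norm_eq, Real.sqrt_eq_one]
  simp only [G6_apply, norm_div, Complex.norm_intCast, Complex.norm_ofNat, div_pow, sq_abs]
  rw [← Finset.sum_div, div_eq_one_iff_eq (by norm_num)]
  exact_mod_cast sum_twoG_sq

lemma rhoA_G6 : rhoA (G6 (√2)⁻¹ (√2)⁻¹) = ((2⁻¹ : ℝ) : ℂ) • 1 := by
  ext s t
  simp only [rhoA, G6_mul_conj, ← Finset.sum_div, ← Int.cast_sum, sum_twoG_snoc_mul]
  by_cases h : s = t <;> norm_num [h]

lemma rhoA2_G6 : rhoA2 (G6 (√2)⁻¹ (√2)⁻¹) = ((4⁻¹ : ℝ) : ℂ) • 1 := by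
  ext s t
  simp only [rhoA2, G6_mul_conj, ← Finset.sum_div, ← Int.cast_sum, sum_twoG_snoc_snoc_mul]
  by_cases h : s = t <;> norm_num [h]

lemma Matrix.IsHermitian.eigenvalues_eq_of_eq_smul_one {d : Type*} [Fintype d] [DecidableEq d]
    {A : Matrix d d ℂ} (h : A.IsHermitian) {c : ℝ} (hA : A = (c : ℂ) • 1) (i : d) :
    h.eigenvalues i = c := by
  have : Nonempty d := ⟨i⟩
  have hspec : h.eigenvalues i ∈ spectrum ℝ (algebraMap ℝ (Matrix d d ℂ) c) := by
    rw [Algebra.algebraMap_eq_smul_one, ← Complex.coe_smul, ← hA]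
    exact h.eigenvalues_mem_spectrum_real i
  rwa [spectrum.scalar_eq, Set.mem_singleton_iff] at hspec

lemma vonNeumannEntropy_eq_of_eq_smul_one {d : Type*} [Fintype d] [DecidableEq d]
    {A : Matrix d d ℂ} (h : A.IsHermitian) {c : ℝ} (hA : A = (c : ℂ) • 1) :
    vonNeumannEntropy A h = -(Fintype.card d * (c * Real.log c)) := by
  simp [vonNeumannEntropy, h.eigenvalues_eq_of_eq_smul_one hA]

lemma six_eq_two_mul_sqrt (δ : ℕ) :
    (6 : ℝ) = 2 * √(13 - 2 ^ (δ + 2) * Real.exp (-(δ * Real.log 2))) := by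
  have h : (2 : ℝ) ^ (δ + 2) * Real.exp (-(δ * Real.log 2)) = 4 := by
    rw [← Real.log_pow, Real.exp_neg, Real.exp_log (by positivity), pow_add]
    field_simp
    norm_num
  rw [h, show (13 - 4 : ℝ) = 3 ^ 2 by norm_num, Real.sqrt_sq (by norm_num)]
  norm_num

/-- for the ground state `G` of the six-site Wen-Plaquette model and
every exchanged Bell operator `B̃′₆` built from unit vectors, `Tr(ρ·B̃′₆) ≤ 6`;
moreover `6 = 2√(13 − 2^{δ+2} e^{−S_{A(δ)}})` for `δ = 1, 2`, where `S_{A(1)} = ln 2`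
and `S_{A(2)} = 2 ln 2` are the entanglement entropies of qubit 6 and of qubits 5–6. -/
theorem six_qubit_bell_bound :
    (∀ a a' : Fin (4 + 1 + 1) → Fin 3 → ℝ,
      (∀ i, IsUnitVec (a i)) → (∀ i, IsUnitVec (a' i)) →
      ((outer (G6 (Real.sqrt 2)⁻¹ (Real.sqrt 2)⁻¹) * bellOpEx a a').trace).re ≤ 6) ∧
    (∀ h : (rhoA (G6 (Real.sqrt 2)⁻¹ (Real.sqrt 2)⁻¹)).IsHermitian,
      vonNeumannEntropy _ h = Real.log 2) ∧
    (∀ h : (rhoA2 (G6 (Real.sqrt 2)⁻¹ (Real.sqrt 2)⁻¹)).IsHermitian,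
      vonNeumannEntropy _ h = 2 * Real.log 2) ∧
    (6 : ℝ) = 2 * Real.sqrt (13 - 2 ^ (1 + 2) * Real.exp (-Real.log 2)) ∧
    (6 : ℝ) = 2 * Real.sqrt (13 - 2 ^ (2 + 2) * Real.exp (-(2 * Real.log 2))) := by
  refine ⟨fun a a' ha ha' => ?_, fun h => ?_, fun h => ?_, by simpa using six_eq_two_mul_sqrt 1,
    by simpa using six_eq_two_mul_sqrt 2⟩
  · linarith [re_trace_outer_mul_bellOpEx_le _ norm_toLp_G6 a a' ha ha']
  · rw [vonNeumannEntropy_eq_of_eq_smul_one h rhoA_G6, Real.log_inv]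
    norm_num
    ring
  · rw [vonNeumannEntropy_eq_of_eq_smul_one h rhoA2_G6, Real.log_inv,
      show (4 : ℝ) = 2 ^ 2 by norm_num, Real.log_pow]
    norm_num
    ring
end
end
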